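/- Second-order bound in the Lindeberg step (inequality (3.17)). Let h : ℝ → ℝ be twice continuously differentiable and let ϰ > 0, κ > 0. Then for every x ∈ ℝ, Ê[h''(x)·ξ(x)²] − h''(x) ≤ κ(σ̄²/σ̲² − 1). -/

import Mathlib

open MeasureTheory ProbabilityTheory Set
open scoped ENNReal NNReal

noncomputable section

/-- A sublinear expectation space on a set `H` of real random variables. -/
structure SublinearExp (Ω : Type) where
  H : Set (Ω → ℝ)
  E : (Ω → ℝ) → ℝ
  const_mem : ∀ c : ℝ, (fun _ => c) ∈ H
  add_mem : ∀ {X Y : Ω → ℝ}, X ∈ H → Y ∈ H → X + Y ∈ H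
  smul_mem : ∀ (c : ℝ) {X : Ω → ℝ}, X ∈ H → c • X ∈ H
  mono : ∀ {X Y : Ω → ℝ}, X ∈ H → Y ∈ H → (∀ ω, X ω ≤ Y ω) → E X ≤ E Y
  const_eq : ∀ c : ℝ, E (fun _ => c) = c
  subadd : ∀ {X Y : Ω → ℝ}, X ∈ H → Y ∈ H → E (X + Y) ≤ E X + E Y
  homog : ∀ {c : ℝ}, 0 ≤ c → ∀ {X : Ω → ℝ}, X ∈ H → E (c • X) = c * E X

variable {Ω : Type}

/-- Upper expectation `Ê[Y]` of an arbitrary function, with value `+∞` if no dominating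
element of `H` exists (`EReal`-valued). -/
def SublinearExp.uexpE (SE : SublinearExp Ω) (Y : Ω → ℝ) : EReal :=
  sInf {r : EReal | ∃ X ∈ SE.H, (∀ ω, Y ω ≤ X ω) ∧ r = (SE.E X : EReal)}

def muLow (SE : SublinearExp Ω) (X₀ : Ω → ℝ) : ℝ := -(SE.E fun ω => -X₀ ω)
def muHigh (SE : SublinearExp Ω) (X₀ : Ω → ℝ) : ℝ := SE.E X₀
def varLow (SE : SublinearExp Ω) (X₀ : Ω → ℝ) (μ : ℝ) : ℝ :=
  -(SE.E fun ω => -((X₀ ω - μ) ^ 2))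
def varHigh (SE : SublinearExp Ω) (X₀ : Ω → ℝ) (μ : ℝ) : ℝ :=
  SE.E fun ω => (X₀ ω - μ) ^ 2
def sigLow (SE : SublinearExp Ω) (X₀ : Ω → ℝ) : ℝ :=
  sInf ((fun μ => Real.sqrt (varLow SE X₀ μ)) '' Set.Icc (muLow SE X₀) (muHigh SE X₀))
def sigHigh (SE : SublinearExp Ω) (X₀ : Ω → ℝ) : ℝ :=
  sSup ((fun μ => Real.sqrt (varHigh SE X₀ μ)) '' Set.Icc (muLow SE X₀) (muHigh SE X₀))

/-- The function `α_ϰ(x|h)` of (3.1)–(3.2), written in terms of `h'`. -/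
def alphaF (SE : SublinearExp Ω) (X₀ : Ω → ℝ) (ϰ : ℝ) (h' : ℝ → ℝ) (x : ℝ) : ℝ :=
  if |h' x| ≤ ϰ then
    (muHigh SE X₀ + muLow SE X₀) / 2 + (muHigh SE X₀ - muLow SE X₀) / 2 * (h' x / ϰ)
  else if ϰ < h' x then muHigh SE X₀
  else muLow SE X₀

/-- The function `β_{ϰ,κ}(x|h)` of (3.3)–(3.4), written in terms of `h'` and `h''`. -/
def betaF (SE : SublinearExp Ω) (X₀ : Ω → ℝ) (ϰ κ : ℝ) (h' h'' : ℝ → ℝ) (x : ℝ) : ℝ :=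
  Real.sqrt (
    if |h'' x| ≤ κ then
      (varHigh SE X₀ (alphaF SE X₀ ϰ h' x) + varLow SE X₀ (alphaF SE X₀ ϰ h' x)) / 2 +
        (varHigh SE X₀ (alphaF SE X₀ ϰ h' x) - varLow SE X₀ (alphaF SE X₀ ϰ h' x)) / 2 *
          (h'' x / κ)
    else if κ < h'' x then varHigh SE X₀ (alphaF SE X₀ ϰ h' x)
    else varLow SE X₀ (alphaF SE X₀ ϰ h' x))

/-- `ξ(x) = (X₀ - α_ϰ(x|h))/β_{ϰ,κ}(x|h)`. -/
def xiF (SE : SublinearExp Ω) (X₀ : Ω → ℝ) (ϰ κ : ℝ) (h' h'' : ℝ → ℝ) (x : ℝ) (ω : Ω) : ℝ :=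
  (X₀ ω - alphaF SE X₀ ϰ h' x) / betaF SE X₀ ϰ κ h' h'' x

/-!
Since `Ê[t Q] = max (t Ě[Q]) (t Ê[Q])` for `Q = (X₀ - α)²`, the quantity
`Ê[h''(x) ξ(x)²] - h''(x)` equals `(max (c σ̲²(α)) (c σ̄²(α)) - c B) / B` with `c = h''(x)` and
`B = β²`. Now `B` interpolates linearly between `σ̲²(α)` and `σ̄²(α)` as `c` runs over
`[-κ, κ]` and is clamped outside, so the numerator is at most `κ (σ̄²(α) - σ̲²(α))`;
finally `σ̲² ≤ σ̲²(α) ≤ B` and `σ̄²(α) ≤ σ̄²` because `α ∈ [μ̲, μ̄]`.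
-/

namespace SublinearExp

variable (SE : SublinearExp Ω)

def lowerE (X : Ω → ℝ) : ℝ := -SE.E fun ω => -X ω

variable {SE}

theorem neg_mem {X : Ω → ℝ} (hX : X ∈ SE.H) : (fun ω => -X ω) ∈ SE.H := by
  have h : -X ∈ SE.H := by simpa using SE.smul_mem (-1) hX
  exact h

theorem lowerE_le_E {X : Ω → ℝ} (hX : X ∈ SE.H) : SE.lowerE X ≤ SE.E X := by
  have h := SE.subadd hX (neg_mem hX)
  rw [show (X + fun ω => -X ω) = fun _ => (0 : ℝ) by funext; simp, SE.const_eq] at h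
  rw [lowerE]
  linarith

theorem lowerE_nonneg {X : Ω → ℝ} (hX : X ∈ SE.H) (hX0 : ∀ ω, 0 ≤ X ω) :
    0 ≤ SE.lowerE X := by
  have h := SE.mono (neg_mem hX) (SE.const_mem 0) fun ω => neg_nonpos.mpr (hX0 ω)
  rw [SE.const_eq] at h
  rw [lowerE]
  linarith

theorem E_smul {X : Ω → ℝ} (hX : X ∈ SE.H) (t : ℝ) :
    SE.E (t • X) = max (t * SE.lowerE X) (t * SE.E X) := by
  rcases le_total 0 t with ht | ht
  · rw [SE.homog ht hX, max_eq_right (mul_le_mul_of_nonneg_left (lowerE_le_E hX) ht)]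
  · have hneg : t • X = (-t) • fun ω => -X ω := by funext; simp
    rw [hneg, SE.homog (neg_nonneg.mpr ht) (neg_mem hX),
      max_eq_left (mul_le_mul_of_nonpos_left (lowerE_le_E hX) ht), lowerE]
    ring

theorem uexpE_le_E {Y : Ω → ℝ} (hY : Y ∈ SE.H) : SE.uexpE Y ≤ SE.E Y :=
  sInf_le ⟨Y, hY, fun _ => le_rfl, rfl⟩

theorem sub_const_sq_mem {X : Ω → ℝ} (hX : X ∈ SE.H) (hX2 : (fun ω => X ω ^ 2) ∈ SE.H)
    (a : ℝ) : (fun ω => (X ω - a) ^ 2) ∈ SE.H := by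
  have h : (fun ω => (X ω - a) ^ 2) = (fun ω => X ω ^ 2) + (-2 * a) • X + fun _ => a ^ 2 := by
    funext ω
    simp only [Pi.add_apply, Pi.smul_apply, smul_eq_mul]
    ring
  rw [h]
  exact SE.add_mem (SE.add_mem hX2 (SE.smul_mem _ hX)) (SE.const_mem _)

end SublinearExp

open SublinearExp

section Moments

variable {SE : SublinearExp Ω} {X₀ : Ω → ℝ}

theorem muLow_le_muHigh (hX₀ : X₀ ∈ SE.H) : muLow SE X₀ ≤ muHigh SE X₀ :=
  lowerE_le_E hX₀

theorem varLow_nonneg (hX₀ : X₀ ∈ SE.H) (hX₀sq : (fun ω => X₀ ω ^ 2) ∈ SE.H) (μ : ℝ) :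
    0 ≤ varLow SE X₀ μ :=
  lowerE_nonneg (sub_const_sq_mem hX₀ hX₀sq μ) fun _ => sq_nonneg _

theorem varLow_le_varHigh (hX₀ : X₀ ∈ SE.H) (hX₀sq : (fun ω => X₀ ω ^ 2) ∈ SE.H) (μ : ℝ) :
    varLow SE X₀ μ ≤ varHigh SE X₀ μ :=
  lowerE_le_E (sub_const_sq_mem hX₀ hX₀sq μ)

theorem sigLow_sq_le_varLow (hσ : 0 < sigLow SE X₀) {μ : ℝ}
    (hμ : μ ∈ Icc (muLow SE X₀) (muHigh SE X₀)) : sigLow SE X₀ ^ 2 ≤ varLow SE X₀ μ := by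
  have hbdd : BddBelow ((fun μ => √(varLow SE X₀ μ)) '' Icc (muLow SE X₀) (muHigh SE X₀)) :=
    ⟨0, by rintro _ ⟨_, _, rfl⟩; exact Real.sqrt_nonneg _⟩
  exact (Real.le_sqrt' hσ).mp (csInf_le hbdd ⟨μ, hμ, rfl⟩)

theorem varHigh_le_sigHigh_sq
    (hσ : BddAbove ((fun μ => √(varHigh SE X₀ μ)) '' Icc (muLow SE X₀) (muHigh SE X₀)))
    {μ : ℝ} (hμ : μ ∈ Icc (muLow SE X₀) (muHigh SE X₀)) :
    varHigh SE X₀ μ ≤ sigHigh SE X₀ ^ 2 :=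
  (Real.sqrt_le_iff.mp (le_csSup hσ ⟨μ, hμ, rfl⟩)).2

end Moments

section ClampInterp

/-- Linear interpolation from `lo` to `hi` as `t` runs over `[-k, k]`, clamped outside; both
`α_ϰ(x|h)` (in `t = h'(x)`) and `β²_{ϰ,κ}(x|h)` (in `t = h''(x)`) have this shape. -/
def clampInterp (lo hi k t : ℝ) : ℝ :=
  if |t| ≤ k then (hi + lo) / 2 + (hi - lo) / 2 * (t / k) else if k < t then hi else lo

variable {lo hi : ℝ}

theorem clampInterp_mem_Icc (h : lo ≤ hi) (k t : ℝ) : clampInterp lo hi k t ∈ Icc lo hi := by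
  unfold clampInterp
  split_ifs with ht
  · rcases ((abs_nonneg t).trans ht).eq_or_lt with rfl | hk
    · simp only [div_zero, mul_zero, add_zero]
      constructor <;> linarith
    have hr : |t / k| ≤ 1 := by rwa [abs_div, abs_of_pos hk, div_le_one hk]
    obtain ⟨hr₁, hr₂⟩ := abs_le.mp hr
    constructor <;> nlinarith
  · exact ⟨h, le_rfl⟩
  · exact ⟨le_rfl, h⟩

theorem max_mul_sub_mul_clampInterp_le (h : lo ≤ hi) {k : ℝ} (hk : 0 ≤ k) (t : ℝ) :
    max (t * lo) (t * hi) - t * clampInterp lo hi k t ≤ k * (hi - lo) := by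
  have hgap : 0 ≤ k * (hi - lo) := mul_nonneg hk (sub_nonneg.mpr h)
  unfold clampInterp
  split_ifs with ht hkt
  · obtain ⟨ht₁, ht₂⟩ := abs_le.mp ht
    rcases hk.eq_or_lt with rfl | hk
    · simp [le_antisymm ht₂ (by linarith)]
    have hmax : max (t * lo) (t * hi) ≤ t * ((hi + lo) / 2) + |t| * ((hi - lo) / 2) := by
      rcases le_total 0 t with h0 | h0
      · rw [abs_of_nonneg h0]; exact max_le (by nlinarith) (by nlinarith)
      · rw [abs_of_nonpos h0]; exact max_le (by nlinarith) (by nlinarith)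
    have hsq : t * (t / k) = |t| * (|t| / k) := by
      rw [mul_div_assoc', mul_div_assoc', abs_mul_abs_self]
    have hfrac : |t| * (1 - |t| / k) ≤ k := by
      have : |t| / k ≤ 1 := (div_le_one hk).mpr ht
      nlinarith [abs_nonneg t, div_nonneg (abs_nonneg t) hk.le]
    nlinarith
  · rw [max_eq_right (by nlinarith)]; linarith
  · have ht0 : t ≤ 0 := by
      by_contra! h0
      exact ht ((abs_of_pos h0).le.trans (not_lt.mp hkt))
    rw [max_eq_left (by nlinarith)]; linarith

end ClampInterp

theorem max_div_sub_le_of_le {s lo hi S c k : ℝ} (hs : 0 < s) (hslo : s ≤ lo) (h : lo ≤ hi)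
    (hhiS : hi ≤ S) (hk : 0 ≤ k) :
    max (c / clampInterp lo hi k c * lo) (c / clampInterp lo hi k c * hi) - c
      ≤ k * (S / s - 1) := by
  set B := clampInterp lo hi k c
  have hB : s ≤ B := hslo.trans (clampInterp_mem_Icc h k c).1
  have hBpos : 0 < B := hs.trans_le hB
  have hnum := max_mul_sub_mul_clampInterp_le h hk c
  calc max (c / B * lo) (c / B * hi) - c
      = (max (c * lo) (c * hi) - c * B) / B := by
        rw [sub_div, mul_div_cancel_right₀ _ hBpos.ne', ← max_div_div_right hBpos.le]
        congr 2 <;> ring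
    _ ≤ k * (hi - lo) / s :=
        div_le_div₀ (mul_nonneg hk (sub_nonneg.mpr h)) hnum hs hB
    _ ≤ k * (S - s) / s := by gcongr
    _ = k * (S / s - 1) := by field_simp

theorem lindeberg_second_order_bound_general
    {Ω : Type} (SE : SublinearExp Ω) (X₀ : Ω → ℝ)
    (hX₀ : X₀ ∈ SE.H) (hX₀sq : (fun ω => (X₀ ω) ^ 2) ∈ SE.H)
    (hσlow : 0 < sigLow SE X₀)
    (hσhigh : BddAbove
      ((fun μ => Real.sqrt (varHigh SE X₀ μ)) '' Set.Icc (muLow SE X₀) (muHigh SE X₀)))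
    (h' h'' : ℝ → ℝ)
    (ϰ κ : ℝ) (hκ : 0 < κ) (x : ℝ) :
    SE.uexpE (fun ω => h'' x * xiF SE X₀ ϰ κ h' h'' x ω ^ 2) - ((h'' x : ℝ) : EReal)
      ≤ ((κ * (sigHigh SE X₀ ^ 2 / sigLow SE X₀ ^ 2 - 1) : ℝ) : EReal) := by
  set α := alphaF SE X₀ ϰ h' x
  have hα : α ∈ Icc (muLow SE X₀) (muHigh SE X₀) :=
    clampInterp_mem_Icc (muLow_le_muHigh hX₀) ϰ (h' x)
  have hvar := varLow_le_varHigh hX₀ hX₀sq α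
  set B := clampInterp (varLow SE X₀ α) (varHigh SE X₀ α) κ (h'' x)
  have hB : 0 ≤ B := (varLow_nonneg hX₀ hX₀sq α).trans (clampInterp_mem_Icc hvar κ (h'' x)).1
  have hQ := sub_const_sq_mem hX₀ hX₀sq α
  have hY : (fun ω => h'' x * xiF SE X₀ ϰ κ h' h'' x ω ^ 2) =
      (h'' x / B) • fun ω => (X₀ ω - α) ^ 2 := by
    funext ω
    show h'' x * ((X₀ ω - α) / √B) ^ 2 = h'' x / B * (X₀ ω - α) ^ 2
    rw [div_pow, Real.sq_sqrt hB]
    ring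
  rw [hY]
  calc SE.uexpE ((h'' x / B) • fun ω => (X₀ ω - α) ^ 2) - (h'' x : EReal)
      ≤ (SE.E ((h'' x / B) • fun ω => (X₀ ω - α) ^ 2) : EReal) - (h'' x : EReal) :=
        EReal.sub_le_sub (uexpE_le_E (SE.smul_mem _ hQ)) le_rfl
    _ ≤ _ := by
        rw [← EReal.coe_sub, EReal.coe_le_coe_iff, E_smul hQ]
        exact max_div_sub_le_of_le (pow_pos hσlow 2) (sigLow_sq_le_varLow hσlow hα) hvar
          (varHigh_le_sigHigh_sq hσhigh hα) hκ.le

/-- **Inequality (3.17)**: second-order bound in the Lindeberg step,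
`Ê[h''(x) ξ(x)²] - h''(x) ≤ κ(σ̄²/σ̲² - 1)`. -/
theorem lindeberg_second_order_bound
    {Ω : Type} (SE : SublinearExp Ω) (X₀ : Ω → ℝ)
    (hX₀ : X₀ ∈ SE.H) (hX₀sq : (fun ω => (X₀ ω) ^ 2) ∈ SE.H)
    (hσlow : 0 < sigLow SE X₀)
    (hσhigh : BddAbove
      ((fun μ => Real.sqrt (varHigh SE X₀ μ)) '' Set.Icc (muLow SE X₀) (muHigh SE X₀)))
    (h h' h'' : ℝ → ℝ)
    (hd1 : ∀ x, HasDerivAt h (h' x) x) (hd2 : ∀ x, HasDerivAt h' (h'' x) x)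
    (hcont : Continuous h'')
    (ϰ κ : ℝ) (hϰ : 0 < ϰ) (hκ : 0 < κ) (x : ℝ) :
    SE.uexpE (fun ω => h'' x * xiF SE X₀ ϰ κ h' h'' x ω ^ 2) - ((h'' x : ℝ) : EReal)
      ≤ ((κ * (sigHigh SE X₀ ^ 2 / sigLow SE X₀ ^ 2 - 1) : ℝ) : EReal) :=
  lindeberg_second_order_bound_general SE X₀ hX₀ hX₀sq hσlow hσhigh h' h'' ϰ κ hκ x

end
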